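/- arXiv:math/0408214 — 4 statements merged into one kernel-verified Lean document; each statement's English description precedes it below -/
import Mathlib

section
/- Let p be a prime and n a positive integer. Let a, b, c, d be integers with b ≠ 0, d ≠ 0 and a/b ≠ c/d. If ‖a/b − c/d‖_p ≤ p^{−n}, then max(|c|, |d|) ≥ p^n/(|a| + |b|). -/
theorem stmt_0 (p : ℕ) (hp : p.Prime) (n : ℕ) (hn : 0 < n)
    (a b c d : ℤ) (hb : b ≠ 0) (hd : d ≠ 0)
    (hne : (a : ℚ) / b ≠ (c : ℚ) / d)
    (h : padicNorm p ((a : ℚ) / b - (c : ℚ) / d) ≤ (p : ℚ) ^ (-(n : ℤ))) :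
    (p : ℚ) ^ n / (|(a : ℚ)| + |(b : ℚ)|) ≤ max |(c : ℚ)| |(d : ℚ)| := by
  haveI : Fact p.Prime := ⟨hp⟩
  set N : ℤ := a * d - b * c with hN
  have hbQ : (b : ℚ) ≠ 0 := Int.cast_ne_zero.mpr hb
  have hdQ : (d : ℚ) ≠ 0 := Int.cast_ne_zero.mpr hd
  have hx : (a : ℚ) / b - (c : ℚ) / d = (N : ℚ) / (b * d) := by
    rw [hN]
    rw [eq_div_iff (mul_ne_zero hbQ hdQ)]
    push_cast
    field_simp
  have hNne : N ≠ 0 := by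
    intro h0
    apply hne
    rw [div_eq_div_iff hbQ hdQ]
    have : (N : ℚ) = 0 := by exact_mod_cast congrArg (Int.cast : ℤ → ℚ) h0
    push_cast [hN] at this
    linarith
  -- padicNorm N ≤ p^(-n)
  have hbd : padicNorm p ((b : ℚ) * d) ≤ 1 := by
    have : ((b * d : ℤ) : ℚ) = (b : ℚ) * d := by push_cast; ring
    rw [← this]
    exact padicNorm.of_int _
  have hbdne : ((b : ℚ) * d) ≠ 0 := mul_ne_zero hbQ hdQ
  have hNnorm : padicNorm p (N : ℚ) ≤ (p : ℚ) ^ (-(n : ℤ)) := by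
    have hx' : (N : ℚ) = ((a : ℚ) / b - (c : ℚ) / d) * ((b : ℚ) * d) := by
      rw [hx]; field_simp
    calc padicNorm p (N : ℚ)
        = padicNorm p ((a : ℚ) / b - (c : ℚ) / d) * padicNorm p ((b : ℚ) * d) := by
          rw [hx', padicNorm.mul]
      _ ≤ (p : ℚ) ^ (-(n : ℤ)) * 1 := by
          apply mul_le_mul h hbd (padicNorm.nonneg _) (zpow_nonneg (by positivity) _)
      _ = (p : ℚ) ^ (-(n : ℤ)) := mul_one _
  have hdvd : ((p ^ n : ℕ) : ℤ) ∣ N := padicNorm.dvd_iff_norm_le.mpr hNnorm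
  have hle : ((p ^ n : ℕ) : ℤ) ≤ |N| :=
    Int.le_of_dvd (abs_pos.mpr hNne) ((dvd_abs _ _).mpr hdvd)
  have hleQ : (p : ℚ) ^ n ≤ |(N : ℚ)| := by exact_mod_cast hle
  have habs : |(N : ℚ)| ≤ (|(a : ℚ)| + |(b : ℚ)|) * max |(c : ℚ)| |(d : ℚ)| := by
    have : (N : ℚ) = (a : ℚ) * d - (b : ℚ) * c := by push_cast [hN]; ring
    rw [this]
    calc |(a : ℚ) * d - (b : ℚ) * c| ≤ |(a : ℚ) * d| + |(b : ℚ) * c| := abs_sub _ _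
      _ = |(a : ℚ)| * |(d : ℚ)| + |(b : ℚ)| * |(c : ℚ)| := by rw [abs_mul, abs_mul]
      _ ≤ |(a : ℚ)| * max |(c : ℚ)| |(d : ℚ)| + |(b : ℚ)| * max |(c : ℚ)| |(d : ℚ)| := by
          gcongr
          · exact le_max_right _ _
          · exact le_max_left _ _
      _ = (|(a : ℚ)| + |(b : ℚ)|) * max |(c : ℚ)| |(d : ℚ)| := by ring
  have hpos : 0 < |(a : ℚ)| + |(b : ℚ)| := by
    have : 0 < |(b : ℚ)| := abs_pos.mpr hbQ
    have := abs_nonneg (a : ℚ)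
    linarith
  rw [div_le_iff₀ hpos]
  calc (p : ℚ) ^ n ≤ |(N : ℚ)| := hleQ
    _ ≤ (|(a : ℚ)| + |(b : ℚ)|) * max |(c : ℚ)| |(d : ℚ)| := habs
    _ = max |(c : ℚ)| |(d : ℚ)| * (|(a : ℚ)| + |(b : ℚ)|) := by ring
end

section
/- (Criterion for p-adic irrationality.) Let p be a prime and η ∈ ℚ_p. Suppose there exist sequences of integers (p_n)_{n≥0} and (q_n)_{n≥0} with q_n ≠ 0 for all n and (|q_n|) unbounded, and a real number δ > 0, such that for all sufficiently large n: 0 < ‖η − p_n/q_n‖_p ≤ (max(|p_n|, |q_n|))^{−(1+δ)}. Then η is irrational, i.e. η is not in the image of the canonical embedding ℚ → ℚ_p. -/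
open Filter

private lemma aux_norm_int_ge (p : ℕ) [Fact p.Prime] (m : ℤ) (hm : m ≠ 0) :
    ((|m| : ℤ) : ℝ)⁻¹ ≤ ‖(m : ℚ_[p])‖ := by
  have hne : (m : ℚ_[p]) ≠ 0 := Int.cast_ne_zero.mpr hm
  rw [Padic.norm_eq_zpow_neg_valuation hne, Padic.valuation_intCast, zpow_neg, zpow_natCast]
  have hdvd : (p : ℤ) ^ padicValInt p m ∣ m := padicValInt_dvd m
  have hle : (p : ℤ) ^ padicValInt p m ≤ |m| :=
    Int.le_of_dvd (abs_pos.mpr hm) ((dvd_abs _ _).mpr hdvd)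
  have hpow : (0:ℝ) < (p : ℝ) ^ padicValInt p m :=
    pow_pos (Nat.cast_pos.mpr (Fact.out : p.Prime).pos) _
  apply inv_anti₀ hpow
  exact_mod_cast hle

theorem stmt_1 (p : ℕ) [Fact p.Prime] (η : ℚ_[p])
    (P Q : ℕ → ℤ) (hQ : ∀ n, Q n ≠ 0)
    (hQunb : ∀ B : ℤ, ∃ n, B < |Q n|)
    (δ : ℝ) (hδ : 0 < δ)
    (h : ∀ᶠ n in Filter.atTop,
      0 < ‖η - (P n : ℚ_[p]) / (Q n : ℚ_[p])‖ ∧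
      ‖η - (P n : ℚ_[p]) / (Q n : ℚ_[p])‖ ≤ ((max |P n| |Q n| : ℤ) : ℝ) ^ (-(1 + δ))) :
    ∀ r : ℚ, η ≠ (r : ℚ_[p]) := by
  intro r hr
  obtain ⟨N, hN⟩ := Filter.eventually_atTop.mp h
  set a : ℤ := r.num with ha
  set b : ℤ := (r.den : ℤ) with hb
  have hb0 : (0:ℤ) < b := by rw [hb]; exact_mod_cast r.pos
  set K : ℤ := |a| + |b| with hK
  have hK1 : (1:ℤ) ≤ K := le_add_of_nonneg_of_le (abs_nonneg a) (le_abs_self b |>.trans' hb0)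
  have hKR1 : (1:ℝ) ≤ (K:ℝ) := by exact_mod_cast hK1
  -- choose B
  obtain ⟨B, hB⟩ := exists_int_gt ((K:ℝ) ^ δ⁻¹)
  -- find a large index with large |Q n|
  have hfreq : ∃ n, N ≤ n ∧ B < |Q n| := by
    set C : ℤ := (((Finset.range N).sup fun i => (Q i).natAbs : ℕ) : ℤ) with hC
    obtain ⟨n, hn⟩ := hQunb (max B C)
    refine ⟨n, ?_, lt_of_le_of_lt (le_max_left _ _) hn⟩
    by_contra hlt
    push_neg at hlt
    have h1 : (Q n).natAbs ≤ (Finset.range N).sup fun i => (Q i).natAbs :=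
      Finset.le_sup (f := fun i => (Q i).natAbs) (Finset.mem_range.mpr hlt)
    have h2 : |Q n| ≤ C := by rw [hC, Int.abs_eq_natAbs]; exact_mod_cast h1
    exact absurd hn (not_lt.mpr (h2.trans (le_max_right _ _)))
  obtain ⟨n, hnN, hnB⟩ := hfreq
  obtain ⟨hpos, hle⟩ := hN n hnN
  have hq0 : (Q n : ℚ_[p]) ≠ 0 := Int.cast_ne_zero.mpr (hQ n)
  have hbq : (b : ℚ_[p]) ≠ 0 := Int.cast_ne_zero.mpr hb0.ne'
  set m : ℤ := a * Q n - b * P n with hm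
  have hrcast : (r : ℚ_[p]) = (a : ℚ_[p]) / (b : ℚ_[p]) := by
    rw [Rat.cast_def]; push_cast; rfl
  have hdiff : η - (P n : ℚ_[p]) / (Q n : ℚ_[p]) = (m : ℚ_[p]) / ((b : ℚ_[p]) * Q n) := by
    rw [hr, hrcast]
    field_simp
    push_cast
    ring_nf
    norm_cast
  have hm0 : m ≠ 0 := by
    intro h0
    rw [hdiff, h0] at hpos
    simp at hpos
  -- lower bound on the norm
  have hnorm_lb : ((|m| : ℤ) : ℝ)⁻¹ ≤ ‖η - (P n : ℚ_[p]) / (Q n : ℚ_[p])‖ := by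
    refine (aux_norm_int_ge p m hm0).trans ?_
    rw [hdiff, norm_div, norm_mul]
    have hden : 0 < ‖(b : ℚ_[p])‖ * ‖(Q n : ℚ_[p])‖ :=
      mul_pos (norm_pos_iff.mpr hbq) (norm_pos_iff.mpr hq0)
    rw [le_div_iff₀ hden]
    calc ‖(m : ℚ_[p])‖ * (‖(b : ℚ_[p])‖ * ‖(Q n : ℚ_[p])‖)
        ≤ ‖(m : ℚ_[p])‖ * (1 * 1) := by
          gcongr
          · exact Padic.norm_int_le_one b
          · exact Padic.norm_int_le_one (Q n)
      _ = ‖(m : ℚ_[p])‖ := by ring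
  set M : ℤ := max |P n| |Q n| with hM
  have hQn1 : (1:ℤ) ≤ |Q n| := Int.one_le_abs (hQ n)
  have hM1 : (1:ℤ) ≤ M := hQn1.trans (le_max_right _ _)
  have hMR1 : (1:ℝ) ≤ (M:ℝ) := by exact_mod_cast hM1
  have hMR0 : (0:ℝ) < (M:ℝ) := lt_of_lt_of_le one_pos hMR1
  -- |m| ≤ K * M
  have habs : |m| ≤ K * M := by
    calc |m| ≤ |a * Q n| + |b * P n| := abs_sub _ _
      _ = |a| * |Q n| + |b| * |P n| := by rw [abs_mul, abs_mul]
      _ ≤ |a| * M + |b| * M := by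
          gcongr
          · exact le_max_right _ _
          · exact le_max_left _ _
      _ = K * M := by ring
  have habsR : ((|m| : ℤ) : ℝ) ≤ (K:ℝ) * (M:ℝ) := by exact_mod_cast habs
  have hm_pos : (0:ℝ) < ((|m| : ℤ) : ℝ) := by exact_mod_cast abs_pos.mpr hm0
  have hKM_pos : (0:ℝ) < (K:ℝ) * (M:ℝ) := lt_of_lt_of_le hm_pos habsR
  -- combine
  have hchain : ((K:ℝ) * (M:ℝ))⁻¹ ≤ ((M:ℝ)) ^ (-(1 + δ)) :=
    le_trans (inv_anti₀ hm_pos habsR) (hnorm_lb.trans hle)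
  have hrw : ((M:ℝ)) ^ (-(1 + δ)) = ((M:ℝ) * (M:ℝ) ^ δ)⁻¹ := by
    rw [Real.rpow_neg hMR0.le, Real.rpow_add hMR0, Real.rpow_one]
  rw [hrw] at hchain
  have hMδpos : (0:ℝ) < (M:ℝ) ^ δ := Real.rpow_pos_of_pos hMR0 δ
  have hmul : (M:ℝ) * (M:ℝ) ^ δ ≤ (K:ℝ) * (M:ℝ) := by
    rwa [inv_le_inv₀ (by positivity) (by positivity)] at hchain
  have hfinal : (M:ℝ) ^ δ ≤ (K:ℝ) := by
    have := hmul
    rw [mul_comm (K:ℝ) (M:ℝ)] at this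
    exact le_of_mul_le_mul_left this hMR0
  -- but M^δ > K
  have hMB : ((K:ℝ) ^ δ⁻¹) < (M:ℝ) := by
    have h1 : ((B:ℝ)) < (M:ℝ) := by
      have : B < M := lt_of_lt_of_le hnB (le_max_right _ _)
      exact_mod_cast this
    exact hB.trans h1
  have hKnn : (0:ℝ) ≤ (K:ℝ) := le_trans zero_le_one hKR1
  have hgt : (K:ℝ) < (M:ℝ) ^ δ := by
    have h2 : ((K:ℝ) ^ δ⁻¹) ^ δ < (M:ℝ) ^ δ :=
      Real.rpow_lt_rpow (Real.rpow_nonneg hKnn _) hMB hδ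
    rwa [← Real.rpow_mul hKnn, inv_mul_cancel₀ hδ.ne', Real.rpow_one] at h2
  exact absurd hfinal (not_le.mpr hgt)
end

section
/- Define f = q·∏_{n≥1}(1+q^n)^{24}, P = 1 + 24·Σ_{n≥1} σ₁^odd(n) q^n, and S = Σ_{n≥1} σ₋₃^odd(n) q^n in ℚ[[q]], and let (b_n)_{n≥0} and (a_n)_{n≥0} be the unique sequences of rational numbers with P = Σ_{n≥0} b_n f^n and P·S = Σ_{n≥0} a_n f^n. Then for every n ≥ 0: b_n ∈ ℤ, and L_n^3 · a_n ∈ ℤ, where L_n = lcm(1, 2, …, n) (with L_0 = 1). -/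
/-!
The expansion `G = ∑ c_n f^n` is triangular: since `f = q + O(q²)` has integer coefficients,
comparing the coefficients of `q^N` gives `c_N = [q^N] G - ∑_{k<N} c_k [q^N] f^k` with integer
`[q^N] f^k`. Hence, by strong induction, `D_N c_N` is an integer as soon as every `D_N [q^N] G` is
one, for any weights with `D_k ∣ D_N` when `k ≤ N`. For `P` take `D_N = 1`. For `P·S` take
`D_N = L_N³`: the coefficient of `q^j` in `S` (`j ≤ N`) is a sum of `d⁻³` over divisors `d ≤ N`
of `j`, each of which divides `L_N`.
-/

open PowerSeries

section Expansion

variable {K : Type*} [CommRing K]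

theorem coeff_pow_self_of_coeff_zero_of_coeff_one {f : K⟦X⟧} (hf₀ : constantCoeff f = 0)
    (hf₁ : coeff 1 f = 1) (k : ℕ) : coeff k (f ^ k) = 1 := by
  obtain ⟨g, rfl⟩ := X_dvd_iff.mpr hf₀
  have hg : constantCoeff g = 1 := by
    rwa [← coeff_zero_eq_constantCoeff_apply, ← coeff_succ_X_mul]
  simpa [mul_pow, hg] using coeff_X_pow_mul (g ^ k) k 0

theorem coeff_eq_sub_of_triangular_expansion {f G : K⟦X⟧} {c : ℕ → K}
    (hf₀ : constantCoeff f = 0) (hf₁ : coeff 1 f = 1)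
    (hG : ∀ N, coeff N G = coeff N (∑ n ∈ Finset.range (N + 1), C (c n) * f ^ n)) (N : ℕ) :
    c N = coeff N G - ∑ k ∈ Finset.range N, c k * coeff N (f ^ k) := by
  rw [hG, map_sum, Finset.sum_range_succ, coeff_C_mul,
    coeff_pow_self_of_coeff_zero_of_coeff_one hf₀ hf₁, mul_one]
  simp only [coeff_C_mul, add_sub_cancel_left]

theorem coeff_pow_mem_of_coeff_mem (A : Subring K) {f : K⟦X⟧} (hf : ∀ n, coeff n f ∈ A)
    (k n : ℕ) : coeff n (f ^ k) ∈ A := by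
  have hF : f = map A.subtype (mk fun n => ⟨coeff n f, hf n⟩) := by ext n; simp
  rw [hF, ← map_pow, coeff_map]
  exact Subtype.prop _

theorem weighted_coeff_mem_of_triangular_expansion (A : Subring K) (D : ℕ → ℕ)
    (hD : ∀ k n, k ≤ n → D k ∣ D n) {f G : K⟦X⟧} {c : ℕ → K}
    (hf₀ : constantCoeff f = 0) (hf₁ : coeff 1 f = 1) (hf : ∀ n, coeff n f ∈ A)
    (hGA : ∀ n, (D n : K) * coeff n G ∈ A)
    (hG : ∀ N, coeff N G = coeff N (∑ n ∈ Finset.range (N + 1), C (c n) * f ^ n)) (n : ℕ) :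
    (D n : K) * c n ∈ A := by
  induction n using Nat.strong_induction_on with
  | _ n ih =>
    rw [coeff_eq_sub_of_triangular_expansion hf₀ hf₁ hG, mul_sub, Finset.mul_sum]
    refine A.sub_mem (hGA n) (A.sum_mem fun k hk => ?_)
    have hkn := Finset.mem_range.mp hk
    obtain ⟨e, he⟩ := hD k n hkn.le
    have hsplit :
        (D n : K) * (c k * coeff n (f ^ k)) = e * ((D k : K) * c k) * coeff n (f ^ k) := by
      rw [he, Nat.cast_mul]; ring
    rw [hsplit]
    exact A.mul_mem (A.mul_mem (natCast_mem A e) (ih k hkn)) (coeff_pow_mem_of_coeff_mem A hf k n)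

theorem weighted_coeff_mul_mem (A : Subring K) (w : K) {P S : K⟦X⟧} (hP : ∀ n, coeff n P ∈ A)
    {n : ℕ} (hS : ∀ j ≤ n, w * coeff j S ∈ A) : w * coeff n (P * S) ∈ A := by
  rw [coeff_mul, Finset.mul_sum]
  refine A.sum_mem fun p hp => ?_
  rw [mul_left_comm]
  exact A.mul_mem (hP _) (hS _ (Finset.HasAntidiagonal.antidiagonal.snd_le hp))

end Expansion

theorem pow_mul_sum_zpow_neg_mem_intRange {L j : ℕ} (hL : ∀ d ∈ j.divisors, d ∣ L)
    (p : ℕ → Prop) [DecidablePred p] (k : ℕ) :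
    (L : ℚ) ^ k * ∑ d ∈ j.divisors.filter p, (d : ℚ) ^ (-k : ℤ) ∈ (Int.castRingHom ℚ).range := by
  rw [Finset.mul_sum]
  refine Subring.sum_mem _ fun d hd => ?_
  have hd := (Finset.mem_filter.mp hd).1
  obtain ⟨e, he⟩ := hL d hd
  have hd₀ : (d : ℚ) ≠ 0 := Nat.cast_ne_zero.mpr (Nat.pos_of_mem_divisors hd).ne'
  have hsplit : (L : ℚ) ^ k * (d : ℚ) ^ (-k : ℤ) = (e : ℚ) ^ k := by
    rw [he, Nat.cast_mul, mul_pow, zpow_neg, zpow_natCast, mul_right_comm,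
      mul_inv_cancel₀ (pow_ne_zero k hd₀), one_mul]
  rw [hsplit]
  exact Subring.pow_mem _ (natCast_mem _ e) k

theorem coeff_X_mul_prod_one_add_X_pow_mem_intRange (s : Finset ℕ) (e n : ℕ) :
    coeff n (X * ∏ k ∈ s, (1 + X ^ k) ^ e : ℚ⟦X⟧) ∈ (Int.castRingHom ℚ).range := by
  have hlift : (X * ∏ k ∈ s, (1 + X ^ k) ^ e : ℚ⟦X⟧) =
      map (Int.castRingHom ℚ) (X * ∏ k ∈ s, (1 + X ^ k) ^ e) := by simp
  rw [hlift, coeff_map]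
  exact ⟨_, rfl⟩

theorem stmt_8 (f P S : PowerSeries ℚ) (a b : ℕ → ℚ)
    (hf : ∀ N, coeff N f = coeff N (X * ∏ n ∈ Finset.Icc 1 N, (1 + X ^ n) ^ 24))
    (hP : P = PowerSeries.mk fun n =>
      if n = 0 then 1 else 24 * ∑ d ∈ n.divisors.filter (fun d => Odd d), (d : ℚ))
    (hS : S = PowerSeries.mk fun n =>
      ∑ d ∈ n.divisors.filter (fun d => Odd d), (d : ℚ) ^ (-3 : ℤ))
    (hb : ∀ N, coeff N P = coeff N (∑ n ∈ Finset.range (N + 1), C (b n) * f ^ n))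
    (ha : ∀ N, coeff N (P * S) = coeff N (∑ n ∈ Finset.range (N + 1), C (a n) * f ^ n)) :
    ∀ n, (∃ m : ℤ, b n = m) ∧
      ∃ m : ℤ, (((Finset.Icc 1 n).lcm id : ℕ) : ℚ) ^ 3 * a n = m := by
  set L : ℕ → ℕ := fun n => (Finset.Icc 1 n).lcm id
  have hL : ∀ k n, k ≤ n → L k ^ 3 ∣ L n ^ 3 := fun k n hkn =>
    pow_dvd_pow_of_dvd (Finset.lcm_mono (Finset.Icc_subset_Icc_right hkn)) 3
  have hf₀ : constantCoeff f = 0 := by simp [← coeff_zero_eq_constantCoeff_apply, hf 0]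
  have hf₁ : coeff 1 f = 1 := by simp [hf 1]
  have hfZ : ∀ n, coeff n f ∈ (Int.castRingHom ℚ).range := fun n => by
    rw [hf]; exact coeff_X_mul_prod_one_add_X_pow_mem_intRange _ _ _
  have hPZ : ∀ n, coeff n P ∈ (Int.castRingHom ℚ).range := fun n => by
    rw [hP, coeff_mk]
    split_ifs
    · exact Subring.one_mem _
    · exact Subring.mul_mem _ (ofNat_mem _ 24) (Subring.sum_mem _ fun d _ => natCast_mem _ d)
  have hPSZ : ∀ n, ((L n ^ 3 : ℕ) : ℚ) * coeff n (P * S) ∈ (Int.castRingHom ℚ).range :=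
    fun n => weighted_coeff_mul_mem _ _ hPZ fun j hj => by
      rw [hS, coeff_mk, Nat.cast_pow]
      exact pow_mul_sum_zpow_neg_mem_intRange (fun d hd => Finset.dvd_lcm (Finset.mem_Icc.mpr
        ⟨Nat.pos_of_mem_divisors hd, (Nat.divisor_le hd).trans hj⟩)) _ 3
  intro n
  constructor
  · simpa [eq_comm] using weighted_coeff_mem_of_triangular_expansion _ (fun _ => 1)
      (fun _ _ _ => dvd_rfl) hf₀ hf₁ hfZ (by simpa using hPZ) hb n
  · simpa [eq_comm] using weighted_coeff_mem_of_triangular_expansion _ (fun n => L n ^ 3)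
      hL hf₀ hf₁ hfZ hPSZ ha n
end

section
/- Let E : ℕ → ℚ be the sequence of Euler (secant) numbers, determined by E₀ = 1 and Σ_{j=0}^{k} C(2k, 2j)·E_{2j} = 0 for every k ≥ 1. Then there exists η ∈ ℚ₂ such that for every sequence (k_j) of positive integers with k_j → ∞ (in ℝ) and ‖k_j + 1‖₂ → 0, the rationals E_{2k_j}/2, viewed in ℚ₂, converge to η. (This common limit is the 2-adic L-value L₂(2,χ), the 2-adic analogue of Catalan's constant, where χ is the primitive Dirichlet character modulo 4 and L(−2k,χ) = E_{2k}/2.) -/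
/-!
Write `d k = (2k+1) E_{2k}` and `G_n(y) = ∑_j C(n,j) E_j y^{n-j}` (`appell eulerNumber n y`), so
that `G_n(y) = 2ⁿ E_n((y+1)/2)` for the Euler polynomial `E_n`. The identity
`G_n(y+1) + G_n(y-1) = 2 yⁿ`, telescoped over `y = 1, 3, …, 2N-1`, expresses the alternating sum
`∑_{a<N} (-1)^a (2a+1)ⁿ` through `G_n(2N)`. For `N = 2^{m+1}` and `n = 2k+1` only the two lowest
powers of `2N` in `G_n(2N)` survive modulo `2^{2m+4}`, which gives
`2^{m+2} d k ≡ -2 ∑_{a<N} (-1)^a (2a+1)^{2k+1}`. Since `x^{2^{M+1}} ≡ 1 mod 2^{M+3}` for odd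
`x`, the right-hand side only depends on `k` modulo `2^{2m}`, so `d k ≡ d k' mod 2^{m+2}` whenever
`k ≡ k' mod 2^{2m}`. Thus `d` is uniformly continuous for the 2-adic metric on `ℕ`, hence has a
limit `c` as `k → -1` 2-adically, and `E_{2k}/2 = d k / (2(2k+1))` tends to `-c/2`.
-/

open Finset Filter Topology

theorem Nat.choose_mul_choose_sub_comm (n i j : ℕ) :
    n.choose j * (n - j).choose i = n.choose i * (n - i).choose j := by
  have hj := Nat.choose_mul (n := n) (k := i + j) (s := j) (by omega)
  have hi := Nat.choose_mul (n := n) (k := i + j) (s := i) (by omega)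
  rw [Nat.add_sub_cancel] at hj
  rw [Nat.add_sub_cancel_left, Nat.choose_symm_add] at hi
  rw [← hj, ← hi]

theorem sum_range_two_mul_add_one_of_odd {M : Type*} [AddCommMonoid M] (f : ℕ → M)
    (hf : ∀ j, Odd j → f j = 0) (k : ℕ) :
    ∑ j ∈ range (2 * k + 1), f j = ∑ t ∈ range (k + 1), f (2 * t) := by
  induction k with
  | zero => simp
  | succ k ih =>
    rw [show 2 * (k + 1) + 1 = 2 * k + 1 + 1 + 1 by ring, sum_range_succ, sum_range_succ, ih,
      hf _ (odd_two_mul_add_one k), add_zero, sum_range_succ (n := k + 1), mul_add_one]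

section Appell

variable {R : Type*} [CommRing R]

def appell (a : ℕ → R) (n : ℕ) (y : R) : R :=
  ∑ j ∈ range (n + 1), (n.choose j : R) * a j * y ^ (n - j)

theorem appell_zero_right (a : ℕ → R) (n : ℕ) : appell a n 0 = a n := by
  rw [appell, sum_eq_single n]
  · simp
  · intro j hj hne
    rw [zero_pow (by simp only [mem_range] at hj; omega), mul_zero]
  · simp

theorem appell_add (a : ℕ → R) (n : ℕ) (y h : R) :
    appell a n (y + h) =
      ∑ i ∈ range (n + 1), (n.choose i : R) * y ^ i * appell a (n - i) h := by
  simp only [appell, add_pow, mul_sum]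
  rw [sum_comm' (t' := range (n + 1)) (s' := fun i => range (n - i + 1))
    (by intro j i; simp only [mem_range]; omega)]
  refine sum_congr rfl fun i _ => sum_congr rfl fun j _ => ?_
  have hc : (n.choose j : R) * ((n - j).choose i : R) =
      (n.choose i : R) * ((n - i).choose j : R) := by
    rw [← Nat.cast_mul, ← Nat.cast_mul, Nat.choose_mul_choose_sub_comm]
  rw [Nat.sub_right_comm]
  linear_combination (a j * y ^ i * h ^ (n - i - j)) * hc

end Appell

theorem appell_succ_modEq (a : ℕ → ℤ) (n : ℕ) (y : ℤ) :
    appell a (n + 1) y ≡ a (n + 1) + (n + 1) * a n * y [ZMOD y ^ 2] := by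
  have hsmall :
      ∑ j ∈ range n, ((n + 1).choose j : ℤ) * a j * y ^ (n + 1 - j) ≡ 0 [ZMOD y ^ 2] :=
    Int.ModEq.sum_zero fun j hj => Int.modEq_zero_iff_dvd.2 <|
      (pow_dvd_pow y (by simp only [mem_range] at hj; omega)).mul_left _
  rw [appell, sum_range_succ, sum_range_succ]
  convert (hsmall.add_right _).add_right _ using 1
  simp only [Nat.choose_succ_self_right, Nat.cast_add, Nat.cast_one, add_tsub_cancel_left, pow_one,
    Nat.choose_self, tsub_self, pow_zero, mul_one]
  ring

/-- For even `n ≥ 2` the recursion reads `∑_{j ≤ n} C(n,j) E_j = 0`, which is the secant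
recursion because the odd-index terms vanish. -/
def eulerNumber : ℕ → ℤ
  | 0 => 1
  | n + 1 =>
    if Even (n + 1) then -∑ j : Fin (n + 1), ((n + 1).choose j : ℤ) * eulerNumber j else 0

namespace eulerNumber

@[simp] theorem zero : eulerNumber 0 = 1 := by rw [eulerNumber]

theorem of_odd {n : ℕ} (hn : Odd n) : eulerNumber n = 0 := by
  cases n with
  | zero => simp at hn
  | succ n => rw [eulerNumber, if_neg (Nat.not_even_iff_odd.2 hn)]

theorem sum_choose_mul {n : ℕ} (hn : Even n) :
    ∑ j ∈ range (n + 1), (n.choose j : ℤ) * eulerNumber j = if n = 0 then 1 else 0 := by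
  cases n with
  | zero => simp
  | succ n =>
    rw [sum_range_succ,
      ← Fin.sum_univ_eq_sum_range (fun j => ((n + 1).choose j : ℤ) * eulerNumber j),
      eulerNumber, if_pos hn]
    simp

end eulerNumber

theorem eq_eulerNumber_of_sum_eq_zero (E : ℕ → ℚ) (hE0 : E 0 = 1)
    (hE : ∀ k : ℕ, 1 ≤ k →
      ∑ j ∈ range (k + 1), ((2 * k).choose (2 * j) : ℚ) * E (2 * j) = 0) (k : ℕ) :
    E (2 * k) = eulerNumber (2 * k) := by
  induction k using Nat.strong_induction_on with | _ k ih => ?_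
  rcases k.eq_zero_or_pos with rfl | hk
  · simpa using hE0
  have hrec :
      ∑ j ∈ range (k + 1), ((2 * k).choose (2 * j) : ℚ) * eulerNumber (2 * j) = 0 := by
    have := eulerNumber.sum_choose_mul (n := 2 * k) (even_two_mul k)
    rw [if_neg (by omega), sum_range_two_mul_add_one_of_odd _
      (fun j hj => by rw [eulerNumber.of_odd hj, mul_zero])] at this
    exact_mod_cast this
  have h := hE k hk
  rw [sum_range_succ, Nat.choose_self, Nat.cast_one, one_mul] at h hrec
  rw [sum_congr rfl fun j hj => by rw [ih j (mem_range.1 hj)]] at h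
  linarith

theorem appell_eulerNumber_one_add_neg_one (r : ℕ) :
    appell eulerNumber r 1 + appell eulerNumber r (-1) = if r = 0 then 2 else 0 := by
  have hneg : appell eulerNumber r (-1) = (-1) ^ r * appell eulerNumber r 1 := by
    rw [appell, appell, mul_sum]
    refine sum_congr rfl fun j hj => ?_
    rcases Nat.even_or_odd j with hj' | hj'
    · rw [← Nat.sub_add_cancel (mem_range_succ_iff.1 hj), pow_add, hj'.neg_one_pow,
        Nat.add_sub_cancel]
      ring
    · rw [eulerNumber.of_odd hj']
      ring
  rw [hneg, ← one_add_mul]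
  rcases Nat.even_or_odd r with hr | hr
  · simp only [appell, one_pow, mul_one]
    rw [hr.neg_one_pow, eulerNumber.sum_choose_mul hr]
    split_ifs <;> norm_num
  · rw [hr.neg_one_pow, if_neg (by rintro rfl; exact Nat.not_odd_zero hr)]
    ring

theorem appell_eulerNumber_add_one_add_sub_one (n : ℕ) (y : ℤ) :
    appell eulerNumber n (y + 1) + appell eulerNumber n (y - 1) = 2 * y ^ n := by
  rw [sub_eq_add_neg, appell_add, appell_add, ← sum_add_distrib]
  simp_rw [← mul_add, appell_eulerNumber_one_add_neg_one]
  rw [sum_eq_single n]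
  · simp [mul_comm]
  · intro i hi hne
    rw [if_neg (by simp only [mem_range] at hi; omega), mul_zero]
  · simp

def altOddPowSum (N n : ℕ) : ℤ := ∑ a ∈ range N, (-1) ^ a * (2 * a + 1) ^ n

theorem two_mul_altOddPowSum (N n : ℕ) :
    2 * altOddPowSum N n = eulerNumber n - (-1) ^ N * appell eulerNumber n (2 * N) := by
  induction N with
  | zero => simp [altOddPowSum, appell_zero_right]
  | succ N ih =>
    have hstep := appell_eulerNumber_add_one_add_sub_one n (2 * N + 1)
    rw [show (2 * N + 1 : ℤ) + 1 = 2 * (N + 1 : ℕ) by push_cast; ring,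
      add_sub_cancel_right] at hstep
    rw [altOddPowSum, sum_range_succ, ← altOddPowSum, mul_add, ih]
    linear_combination -(-1) ^ N * hstep

theorem Int.two_pow_dvd_pow_two_pow_sub_one {x : ℤ} (hx : Odd x) (M : ℕ) :
    2 ^ (M + 3) ∣ x ^ 2 ^ (M + 1) - 1 := by
  induction M with
  | zero => simpa using Int.eight_dvd_sq_sub_one_of_odd hx
  | succ M ih =>
    have hfactor : x ^ 2 ^ (M + 2) - 1 = (x ^ 2 ^ (M + 1) - 1) * (x ^ 2 ^ (M + 1) + 1) := by
      rw [pow_succ 2 (M + 1), pow_mul]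
      ring
    rw [hfactor, pow_succ]
    exact mul_dvd_mul ih (even_iff_two_dvd.1 (hx.pow.add_one))

theorem Int.pow_modEq_pow_of_odd {x : ℤ} (hx : Odd x) {M n n' : ℕ}
    (h : n ≡ n' [MOD 2 ^ (M + 1)]) :
    x ^ n ≡ x ^ n' [ZMOD 2 ^ (M + 3)] := by
  have hreduce : ∀ n, x ^ n ≡ x ^ (n % 2 ^ (M + 1)) [ZMOD 2 ^ (M + 3)] := fun n => by
    have hone : x ^ 2 ^ (M + 1) ≡ 1 [ZMOD 2 ^ (M + 3)] :=
      (Int.modEq_iff_dvd.2 (Int.two_pow_dvd_pow_two_pow_sub_one hx M)).symm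
    calc x ^ n = (x ^ 2 ^ (M + 1)) ^ (n / 2 ^ (M + 1)) * x ^ (n % 2 ^ (M + 1)) := by
          rw [← pow_mul, ← pow_add, Nat.div_add_mod]
      _ ≡ 1 ^ (n / 2 ^ (M + 1)) * x ^ (n % 2 ^ (M + 1)) [ZMOD 2 ^ (M + 3)] :=
          (hone.pow _).mul_right _
      _ = x ^ (n % 2 ^ (M + 1)) := by rw [one_pow, one_mul]
  exact (hreduce n).trans (h ▸ (hreduce n').symm)

theorem altOddPowSum_modEq (N : ℕ) {M n n' : ℕ} (h : n ≡ n' [MOD 2 ^ (M + 1)]) :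
    altOddPowSum N n ≡ altOddPowSum N n' [ZMOD 2 ^ (M + 3)] :=
  Int.ModEq.sum fun a _ => (Int.pow_modEq_pow_of_odd ⟨a, rfl⟩ h).mul_left _

theorem two_pow_mul_odd_mul_eulerNumber_modEq (m k : ℕ) :
    2 ^ (m + 2) * ((2 * k + 1) * eulerNumber (2 * k)) ≡
      -(2 * altOddPowSum (2 ^ (m + 1)) (2 * k + 1)) [ZMOD 2 ^ (m + 2) * 2 ^ (m + 2)] := by
  have hsum := two_mul_altOddPowSum (2 ^ (m + 1)) (2 * k + 1)
  rw [eulerNumber.of_odd (odd_two_mul_add_one k),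
    (Nat.even_pow.2 ⟨even_two, by omega⟩).neg_one_pow] at hsum
  have happell := appell_succ_modEq eulerNumber (2 * k) (2 ^ (m + 2))
  rw [eulerNumber.of_odd (odd_two_mul_add_one k), sq] at happell
  rw [hsum, show (2 * (2 ^ (m + 1) : ℕ) : ℤ) = 2 ^ (m + 2) by push_cast; ring]
  convert happell.symm using 1 <;> push_cast <;> ring

theorem odd_mul_eulerNumber_modEq {m k k' : ℕ} (h : k ≡ k' [MOD 2 ^ (2 * m)]) :
    (2 * k + 1) * eulerNumber (2 * k) ≡
      (2 * k' + 1) * eulerNumber (2 * k') [ZMOD 2 ^ (m + 2)] := by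
  have hodd : 2 * k + 1 ≡ 2 * k' + 1 [MOD 2 ^ (2 * m + 1)] := by
    rw [pow_succ']
    exact (h.mul_left' 2).add_right 1
  have hsum := (altOddPowSum_modEq (2 ^ (m + 1)) hodd).mul_left' (c := 2)
  rw [← pow_succ', show 2 * m + 3 + 1 = (m + 2) + (m + 2) by ring, pow_add] at hsum
  refine Int.ModEq.mul_left_cancel' (c := 2 ^ (m + 2)) (by positivity) ?_
  exact (two_pow_mul_odd_mul_eulerNumber_modEq m k).trans
    (hsum.neg.trans (two_pow_mul_odd_mul_eulerNumber_modEq m k').symm)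

theorem exists_tendsto_comap_nhds {α β γ : Type*} [PseudoMetricSpace β] [PseudoMetricSpace γ]
    [CompleteSpace γ] [Nonempty γ] (ι : α → β) (f : α → γ)
    (hf : ∀ ε > 0, ∃ δ > 0, ∀ a a', dist (ι a) (ι a') < δ → dist (f a) (f a') < ε)
    (b : β) :
    ∃ c, Tendsto f (comap ι (𝓝 b)) (𝓝 c) := by
  rcases (comap ι (𝓝 b)).eq_or_neBot with hbot | hne
  · exact ⟨Classical.arbitrary γ, hbot ▸ tendsto_bot⟩
  refine CompleteSpace.complete (Metric.cauchy_iff.2 ⟨map_neBot, fun ε hε => ?_⟩)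
  obtain ⟨δ, hδ, hfδ⟩ := hf ε hε
  refine ⟨f '' (ι ⁻¹' Metric.ball b (δ / 2)),
    image_mem_map (preimage_mem_comap (Metric.ball_mem_nhds b (half_pos hδ))), ?_⟩
  rintro _ ⟨a, ha, rfl⟩ _ ⟨a', ha', rfl⟩
  refine hfδ a a' ((dist_triangle_right _ _ b).trans_lt ?_)
  linarith [Metric.mem_ball.1 ha, Metric.mem_ball.1 ha']

theorem Padic.dist_intCast_le_pow_iff_modEq {p : ℕ} [Fact p.Prime] {a b : ℤ} {n : ℕ} :
    dist (a : ℚ_[p]) b ≤ (p : ℝ) ^ (-n : ℤ) ↔ a ≡ b [ZMOD (p : ℤ) ^ n] := by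
  rw [dist_comm, dist_eq_norm, ← Int.cast_sub, Padic.norm_int_le_pow_iff_dvd, Int.modEq_iff_dvd]

theorem exists_dist_odd_mul_eulerNumber_lt {ε : ℝ} (hε : 0 < ε) :
    ∃ δ > 0, ∀ k k' : ℕ, dist (k : ℚ_[2]) k' < δ →
      dist (((2 * k + 1) * eulerNumber (2 * k) : ℤ) : ℚ_[2])
        (((2 * k' + 1) * eulerNumber (2 * k') : ℤ) : ℚ_[2]) < ε := by
  obtain ⟨m, hm⟩ := exists_pow_lt_of_lt_one hε (by norm_num : (1 / 2 : ℝ) < 1)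
  refine ⟨(2 : ℕ) ^ (-(2 * m : ℕ) : ℤ), by positivity, fun k k' hk => ?_⟩
  have hkk : k ≡ k' [MOD 2 ^ (2 * m)] := by
    refine Int.natCast_modEq_iff.1 ?_
    exact_mod_cast Padic.dist_intCast_le_pow_iff_modEq (a := k) (b := k') (n := 2 * m).1
      (by exact_mod_cast hk.le)
  have hd := Padic.dist_intCast_le_pow_iff_modEq.2 (odd_mul_eulerNumber_modEq hkk)
  refine hd.trans_lt (lt_of_le_of_lt ?_ hm)
  rw [zpow_neg, zpow_natCast, one_div_pow, one_div]
  gcongr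
  exact pow_le_pow_right₀ one_le_two (by omega)

theorem stmt_16 (E : ℕ → ℚ) (hE0 : E 0 = 1)
    (hE : ∀ k : ℕ, 1 ≤ k →
      ∑ j ∈ Finset.range (k + 1), (Nat.choose (2 * k) (2 * j) : ℚ) * E (2 * j) = 0) :
    ∃ η : ℚ_[2], ∀ k : ℕ → ℕ, (∀ j, 0 < k j) →
      Filter.Tendsto (fun j => (k j : ℝ)) Filter.atTop Filter.atTop →
      Filter.Tendsto (fun j => ‖(k j : ℚ_[2]) + 1‖) Filter.atTop (nhds 0) →
      Filter.Tendsto (fun j => ((E (2 * k j) / 2 : ℚ) : ℚ_[2])) Filter.atTop (nhds η) := by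
  let F := comap (Nat.cast : ℕ → ℚ_[2]) (𝓝 (-1))
  obtain ⟨c, hc⟩ := exists_tendsto_comap_nhds (Nat.cast : ℕ → ℚ_[2])
    (fun k => (((2 * k + 1) * eulerNumber (2 * k) : ℤ) : ℚ_[2]))
    (fun _ => exists_dist_odd_mul_eulerNumber_lt) (-1)
  have hden : Tendsto (fun k : ℕ => (2 * (k : ℚ_[2]) + 1) * 2) F (𝓝 (-2)) := by
    have hcast : Tendsto (Nat.cast : ℕ → ℚ_[2]) F (𝓝 (-1)) := tendsto_comap
    convert ((hcast.const_mul 2).add_const 1).mul_const 2 using 2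
    norm_num
  have hlim : Tendsto (fun k : ℕ => ((E (2 * k) / 2 : ℚ) : ℚ_[2])) F (𝓝 (c / -2)) := by
    refine (hc.div hden (by norm_num)).congr fun k => ?_
    have hk : (2 * (k : ℚ_[2]) + 1) ≠ 0 := by exact_mod_cast (2 * k).succ_ne_zero
    rw [Pi.div_apply, eq_eulerNumber_of_sum_eq_zero E hE0 hE k]
    push_cast
    field_simp
  refine ⟨c / -2, fun k _ _ hk => hlim.comp (tendsto_comap_iff.2 ?_)⟩
  rw [tendsto_iff_norm_sub_tendsto_zero]
  simpa using hk
end
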